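/- arXiv:2502.12329 — 4 statements merged into one kernel-verified Lean document; each statement's English description precedes it below -/
import Mathlib

section
/- Consider g : ℝ^d → ℝ continuously differentiable, a nonempty set S̃ ⊆ ℝ^d, a nonnegative function P(·; S̃), and constants c₁ > 0, c₂ ≥ 0 such that ⟨∇g(x), x − proj_{S̃}(x)⟩ ≥ c₁ P(x; S̃) − c₂ for all x ∈ ℝ^d. Let x⁺ = x − γ ∇g(x), where γ = min{γ̃, γ_b} with γ_b > 0 and γ̃ satisfying 0 < γ_⋆ ≤ γ̃ ≤ (2−α)(⟨∇g(x), x − x_p⟩ + c₂ + β)/‖∇g(x)‖² for some 0 < α < 2, β > 0, x_p := proj_{S̃}(x). Then ‖x⁺ − proj_{S̃}(x⁺)‖² ≤ ‖x − x_p‖² − α γ c₁ P(x; S̃) + (2−α) γ β + 2 γ c₂, and moreover ‖x⁺ − proj_{S̃}(x⁺)‖² ≤ ‖x − x_p‖² − α γ_min c₁ P(x; S̃) + (2−α) γ_b β + 2 γ_b c₂ with γ_min := min{γ_⋆, γ_b}. (This is the single-step, pathwise descent inequality of the stochastic theorem, with g = f_ξ for the realized sample ξ.) -/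
/-!
Since `proj x` lies in `S̃`, the distance from `x⁺` to its own projection is at most
`‖x⁺ - proj x‖`, and expanding `‖(x - proj x) - γ ∇g(x)‖²` gives
`‖x - proj x‖² - 2γ⟪∇g(x), x - proj x⟫ + γ²‖∇g(x)‖²`. The step-size bound `γ ≤ γ̃` turns the
quadratic term into `(2 - α) γ (⟪∇g(x), x - proj x⟫ + c₂ + β)`, leaving `-α γ ⟪∇g(x), x - proj x⟫`,
which the assumption on `g` bounds by `-α γ (c₁ P(x) - c₂)`. The second inequality follows from
`min γ_⋆ γ_b ≤ γ ≤ γ_b`.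
-/

open scoped RealInnerProductSpace

lemma mul_le_of_pos_of_le_div {a b c : ℝ} (ha : 0 < a) (hc : 0 ≤ c) (h : a ≤ b / c) :
    a * c ≤ b := by
  rcases hc.eq_or_lt with rfl | hc
  · rw [div_zero] at h
    exact absurd h (not_le.mpr ha)
  · exact (le_div_iff₀ hc).mp h

section Projection

variable {E : Type*} [NormedAddCommGroup E] [InnerProductSpace ℝ E]

lemma norm_sub_smul_sq (u v : E) (γ : ℝ) :
    ‖u - γ • v‖ ^ 2 = ‖u‖ ^ 2 - 2 * γ * ⟪v, u⟫ + γ ^ 2 * ‖v‖ ^ 2 := by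
  rw [norm_sub_sq_real, real_inner_smul_right, real_inner_comm, norm_smul, mul_pow,
    Real.norm_eq_abs, sq_abs]
  ring

lemma sq_dist_proj_sub_smul_le {S : Set E} {proj : E → E}
    (hproj : ∀ y, proj y ∈ S ∧ ∀ z ∈ S, ‖y - proj y‖ ≤ ‖y - z‖)
    (x v : E) {α γ c : ℝ} (hγ : 0 ≤ γ)
    (hstep : γ * ‖v‖ ^ 2 ≤ (2 - α) * (⟪v, x - proj x⟫ + c)) :
    ‖x - γ • v - proj (x - γ • v)‖ ^ 2 ≤
      ‖x - proj x‖ ^ 2 - α * γ * ⟪v, x - proj x⟫ + (2 - α) * γ * c := by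
  have hnearest : ‖x - γ • v - proj (x - γ • v)‖ ≤ ‖(x - proj x) - γ • v‖ :=
    ((hproj _).2 _ (hproj x).1).trans_eq (by rw [sub_right_comm])
  calc ‖x - γ • v - proj (x - γ • v)‖ ^ 2
      ≤ ‖(x - proj x) - γ • v‖ ^ 2 := pow_le_pow_left₀ (norm_nonneg _) hnearest 2
    _ = ‖x - proj x‖ ^ 2 - 2 * γ * ⟪v, x - proj x⟫ + γ * (γ * ‖v‖ ^ 2) := by
        rw [norm_sub_smul_sq]; ring
    _ ≤ ‖x - proj x‖ ^ 2 - 2 * γ * ⟪v, x - proj x⟫ + γ * ((2 - α) * (⟪v, x - proj x⟫ + c)) := by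
        gcongr
    _ = ‖x - proj x‖ ^ 2 - α * γ * ⟪v, x - proj x⟫ + (2 - α) * γ * c := by ring

end Projection

lemma descent_bound_le_of_le_of_le {α β c₁ c₂ p γ γmin γmax : ℝ} (hα₁ : 0 ≤ α) (hα₂ : α ≤ 2)
    (hβ : 0 ≤ β) (hc₂ : 0 ≤ c₂) (hp : 0 ≤ c₁ * p) (hmin : γmin ≤ γ) (hmax : γ ≤ γmax) :
    -(α * γ * c₁ * p) + (2 - α) * γ * β + 2 * γ * c₂ ≤
      -(α * γmin * c₁ * p) + (2 - α) * γmax * β + 2 * γmax * c₂ := by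
  have h₁ : α * γmin * (c₁ * p) ≤ α * γ * (c₁ * p) := by gcongr
  have h₂ : (2 - α) * γ * β ≤ (2 - α) * γmax * β := by gcongr
  have h₃ : 2 * γ * c₂ ≤ 2 * γmax * c₂ := by gcongr
  linarith

theorem single_step_descent_inequality_general
    {d : ℕ} (g : EuclideanSpace ℝ (Fin d) → ℝ)
    (St : Set (EuclideanSpace ℝ (Fin d)))
    (proj : EuclideanSpace ℝ (Fin d) → EuclideanSpace ℝ (Fin d))
    (hproj : ∀ y, proj y ∈ St ∧ ∀ z ∈ St, ‖y - proj y‖ ≤ ‖y - z‖)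
    (P : EuclideanSpace ℝ (Fin d) → ℝ) (hP : ∀ y, 0 ≤ P y)
    (c₁ c₂ : ℝ) (hc₁ : 0 < c₁) (hc₂ : 0 ≤ c₂)
    (hass : ∀ y, c₁ * P y - c₂ ≤ ⟪gradient g y, y - proj y⟫)
    (x xplus : EuclideanSpace ℝ (Fin d))
    (α β γ γt γb γstar : ℝ)
    (hα₁ : 0 < α) (hα₂ : α < 2) (hβ : 0 < β)
    (hγb : 0 < γb) (hγstar : 0 < γstar)
    (hγt₁ : γstar ≤ γt)
    (hγt₂ : γt ≤ (2 - α) * (⟪gradient g x, x - proj x⟫ + c₂ + β) / ‖gradient g x‖ ^ 2)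
    (hγ : γ = min γt γb)
    (hxplus : xplus = x - γ • gradient g x) :
    ‖xplus - proj xplus‖ ^ 2 ≤
        ‖x - proj x‖ ^ 2 - α * γ * c₁ * P x + (2 - α) * γ * β + 2 * γ * c₂
    ∧ ‖xplus - proj xplus‖ ^ 2 ≤
        ‖x - proj x‖ ^ 2 - α * min γstar γb * c₁ * P x + (2 - α) * γb * β + 2 * γb * c₂ := by
  set v := gradient g x
  have hγt : 0 < γt := hγstar.trans_le hγt₁
  have hγ_le_γt : γ ≤ γt := hγ ▸ min_le_left _ _
  have hγ_le_γb : γ ≤ γb := hγ ▸ min_le_right _ _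
  have hγ_pos : 0 < γ := hγ ▸ lt_min hγt hγb
  have hstep : γ * ‖v‖ ^ 2 ≤ (2 - α) * (⟪v, x - proj x⟫ + (c₂ + β)) := by
    rw [← add_assoc]
    exact (mul_le_mul_of_nonneg_right hγ_le_γt (by positivity)).trans
      (mul_le_of_pos_of_le_div hγt (by positivity) hγt₂)
  have hdescent := hxplus ▸ sq_dist_proj_sub_smul_le hproj x v hγ_pos.le hstep
  have hinner : α * γ * (c₁ * P x - c₂) ≤ α * γ * ⟪v, x - proj x⟫ := by
    gcongr; exact hass x
  have hfirst : ‖xplus - proj xplus‖ ^ 2 ≤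
      ‖x - proj x‖ ^ 2 - α * γ * c₁ * P x + (2 - α) * γ * β + 2 * γ * c₂ := by
    linarith
  refine ⟨hfirst, ?_⟩
  have hmono := descent_bound_le_of_le_of_le (p := P x) hα₁.le hα₂.le hβ.le hc₂
    (mul_nonneg hc₁.le (hP x)) (hγ ▸ min_le_min_right γb hγt₁) hγ_le_γb
  linarith

/-- The single-step, pathwise descent inequality underlying the stochastic theorem
(Theorem 2), stated for a realized sample `g = f_ξ`. -/
theorem single_step_descent_inequality
    {d : ℕ} (g : EuclideanSpace ℝ (Fin d) → ℝ)
    (hg : ContDiff ℝ 1 g)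
    (St : Set (EuclideanSpace ℝ (Fin d))) (hStne : St.Nonempty)
    (proj : EuclideanSpace ℝ (Fin d) → EuclideanSpace ℝ (Fin d))
    (hproj : ∀ y, proj y ∈ St ∧ ∀ z ∈ St, ‖y - proj y‖ ≤ ‖y - z‖)
    (P : EuclideanSpace ℝ (Fin d) → ℝ) (hP : ∀ y, 0 ≤ P y)
    (c₁ c₂ : ℝ) (hc₁ : 0 < c₁) (hc₂ : 0 ≤ c₂)
    (hass : ∀ y, c₁ * P y - c₂ ≤ ⟪gradient g y, y - proj y⟫)
    (x xplus : EuclideanSpace ℝ (Fin d))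
    (α β γ γt γb γstar : ℝ)
    (hα₁ : 0 < α) (hα₂ : α < 2) (hβ : 0 < β)
    (hγb : 0 < γb) (hγstar : 0 < γstar)
    (hγt₁ : γstar ≤ γt)
    (hγt₂ : γt ≤ (2 - α) * (⟪gradient g x, x - proj x⟫ + c₂ + β) / ‖gradient g x‖ ^ 2)
    (hγ : γ = min γt γb)
    (hxplus : xplus = x - γ • gradient g x) :
    ‖xplus - proj xplus‖ ^ 2 ≤
        ‖x - proj x‖ ^ 2 - α * γ * c₁ * P x + (2 - α) * γ * β + 2 * γ * c₂
    ∧ ‖xplus - proj xplus‖ ^ 2 ≤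
        ‖x - proj x‖ ^ 2 - α * min γstar γb * c₁ * P x + (2 - α) * γb * β + 2 * γb * c₂ :=
  single_step_descent_inequality_general g St proj hproj P hP c₁ c₂ hc₁ hc₂ hass x xplus α β γ γt γb
    γstar hα₁ hα₂ hβ hγb hγstar hγt₁ hγt₂ hγ hxplus
end

section
/- Let f : ℝ^d → ℝ be continuously differentiable and L-smooth with a nonempty set S of global minimizers, minimal value f⋆ = 0, S̃ = S, and suppose there exist c₁ > 0, c₂ ≥ 0 such that ⟨∇f(x), x − proj_{S}(x)⟩ ≥ c₁ f(x) − c₂ for all x ∈ ℝ^d (a relaxed aiming condition). Let x^{k+1} = x^k − γ^k ∇f(x^k) with γ^k = c₁ f(x^k)/‖∇f(x^k)‖². Then for every K ≥ 0: min_{0≤k≤K} f(x^k) ≤ 2L ‖x^0 − x^0_p‖²/(c₁² (K+1)) + 2c₂/c₁, where x^0_p := proj_{S}(x^0). -/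
/-!
Because `f ≥ 0` has an `L`-Lipschitz gradient, `‖∇f x‖² ≤ 2L f(x)`, so the Polyak stepsize is at
least `c₁ / (2L)`. Expanding `‖xᵏ⁺¹ - proj xᵏ‖²` and using the aiming inequality shows that, as long
as `c₁ f(xᵏ) > 2c₂`, the squared distance to `S` drops by at least `c₁ (c₁ f(xᵏ) - 2c₂) / (2L)` in
one step. If the minimum of `f(xᵏ)` over `k ≤ K` exceeded `2c₂ / c₁`, the `K + 1` drops would
together be bounded by `‖x⁰ - proj x⁰‖²`, which is the claimed bound.
-/

open scoped RealInnerProductSpace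

section Smooth

variable {E : Type*} [NormedAddCommGroup E] [InnerProductSpace ℝ E] [CompleteSpace E]
  {f : E → ℝ} {L : ℝ}

theorem hasDerivAt_comp_add_smul (hf : Differentiable ℝ f) (y v : E) (t : ℝ) :
    HasDerivAt (fun t : ℝ => f (y + t • v)) ⟪gradient f (y + t • v), v⟫ t := by
  have hline : HasDerivAt (fun t : ℝ => y + t • v) v t := by
    simpa using ((hasDerivAt_id t).smul_const v).const_add y
  exact (hf _).hasGradientAt.hasFDerivAt.comp_hasDerivAt t hline

theorem le_add_inner_gradient_add_sq (hf : Differentiable ℝ f)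
    (hsmooth : ∀ y z, ‖gradient f y - gradient f z‖ ≤ L * ‖y - z‖) (y z : E) :
    f z ≤ f y + ⟪gradient f y, z - y⟫ + L / 2 * ‖z - y‖ ^ 2 := by
  set v := z - y
  set φ : ℝ → ℝ := fun t => f (y + t • v) - t * ⟪gradient f y, v⟫ - L / 2 * t ^ 2 * ‖v‖ ^ 2
  have hφ : ∀ t : ℝ, HasDerivAt φ
      (⟪gradient f (y + t • v), v⟫ - ⟪gradient f y, v⟫ - L * t * ‖v‖ ^ 2) t := by
    intro t
    have hsq := ((hasDerivAt_pow 2 t).const_mul (L / 2)).mul_const (‖v‖ ^ 2)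
    refine (((hasDerivAt_comp_add_smul hf y v t).sub
      ((hasDerivAt_id' t).mul_const ⟪gradient f y, v⟫)).sub hsq).congr_deriv ?_
    rw [show (2 : ℕ) - 1 = 1 from rfl]
    push_cast
    ring
  have hφ' : ∀ t ∈ interior (Set.Icc (0 : ℝ) 1), deriv φ t ≤ 0 := by
    intro t ht
    rw [interior_Icc] at ht
    rw [(hφ t).deriv, sub_nonpos, ← inner_sub_left]
    calc ⟪gradient f (y + t • v) - gradient f y, v⟫
        ≤ ‖gradient f (y + t • v) - gradient f y‖ * ‖v‖ := real_inner_le_norm _ _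
      _ ≤ L * ‖t • v‖ * ‖v‖ := by
          gcongr
          simpa using hsmooth (y + t • v) y
      _ = L * t * ‖v‖ ^ 2 := by rw [norm_smul, Real.norm_of_nonneg ht.1.le]; ring
  have hanti : AntitoneOn φ (Set.Icc 0 1) :=
    antitoneOn_of_deriv_nonpos (convex_Icc 0 1) (fun t _ => (hφ t).continuousAt.continuousWithinAt)
      (fun t _ => (hφ t).differentiableAt.differentiableWithinAt) hφ'
  have h01 := hanti (Set.left_mem_Icc.2 zero_le_one) (Set.right_mem_Icc.2 zero_le_one) zero_le_one
  simp only [φ, v, one_smul, add_sub_cancel, zero_smul, add_zero] at h01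
  linarith

theorem sq_norm_gradient_le (hL : 0 < L) (hf : Differentiable ℝ f)
    (hsmooth : ∀ y z, ‖gradient f y - gradient f z‖ ≤ L * ‖y - z‖) (hf0 : ∀ y, 0 ≤ f y) (y : E) :
    ‖gradient f y‖ ^ 2 ≤ 2 * L * f y := by
  -- A gradient step of length `1 / L` lowers `f` by at least `‖∇f y‖² / (2L)`, and `f ≥ 0`.
  have hdescent := le_add_inner_gradient_add_sq hf hsmooth y (y - L⁻¹ • gradient f y)
  rw [sub_sub_cancel_left, inner_neg_right, real_inner_smul_right, real_inner_self_eq_norm_sq,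
    norm_neg, norm_smul, Real.norm_of_nonneg (inv_nonneg.2 hL.le)] at hdescent
  have hdrop : ‖gradient f y‖ ^ 2 / (2 * L) ≤ f y := by
    have := hf0 (y - L⁻¹ • gradient f y)
    have : L / 2 * (L⁻¹ * ‖gradient f y‖) ^ 2 = L⁻¹ * ‖gradient f y‖ ^ 2 / 2 := by field_simp
    rw [div_eq_inv_mul, mul_inv, mul_right_comm]
    linarith
  rwa [div_le_iff₀ (by positivity), mul_comm] at hdrop

end Smooth

section Polyak

variable {E : Type*} [NormedAddCommGroup E] [InnerProductSpace ℝ E]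

theorem norm_sub_smul_sub_sq (y p g : E) (γ : ℝ) :
    ‖y - γ • g - p‖ ^ 2 = ‖y - p‖ ^ 2 - 2 * γ * ⟪g, y - p⟫ + γ ^ 2 * ‖g‖ ^ 2 := by
  rw [sub_right_comm, norm_sub_sq_real, real_inner_smul_right, norm_smul, mul_pow,
    Real.norm_eq_abs, sq_abs, real_inner_comm]
  ring

theorem polyak_step_decrease (y p g : E) {F L c₁ c₂ : ℝ} (hL : 0 < L) (hc₂ : 0 ≤ c₂)
    (hg : ‖g‖ ^ 2 ≤ 2 * L * F) (haim : c₁ * F - c₂ ≤ ⟪g, y - p⟫) (hF : 2 * c₂ < c₁ * F) :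
    ‖y - (c₁ * F / ‖g‖ ^ 2) • g - p‖ ^ 2 + c₁ / (2 * L) * (c₁ * F - 2 * c₂) ≤ ‖y - p‖ ^ 2 := by
  set γ := c₁ * F / ‖g‖ ^ 2
  have hg0 : 0 < ‖g‖ ^ 2 := by
    refine pow_pos (norm_pos_iff.2 fun h => ?_) 2
    rw [h, inner_zero_left] at haim
    linarith
  have hγg : γ * ‖g‖ ^ 2 = c₁ * F := div_mul_cancel₀ _ hg0.ne'
  have hF0 : 0 < F := pos_of_mul_pos_right (hg0.trans_le hg) (by positivity)
  have hγ : c₁ / (2 * L) ≤ γ :=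
    calc c₁ / (2 * L) = c₁ * F / (2 * L * F) := by field_simp
      _ ≤ γ := div_le_div_of_nonneg_left (by linarith) hg0 hg
  have hγsq : γ ^ 2 * ‖g‖ ^ 2 = γ * (c₁ * F) := by rw [← hγg]; ring
  rw [norm_sub_smul_sub_sq, hγsq]
  linarith [mul_le_mul_of_nonneg_left haim (div_nonneg (by linarith) hg0.le : 0 ≤ γ),
    mul_le_mul_of_nonneg_right hγ (by linarith : 0 ≤ c₁ * F - 2 * c₂)]

end Polyak

theorem add_mul_le_of_forall_add_le {D : ℕ → ℝ} {a : ℝ} {n : ℕ}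
    (h : ∀ k < n, D (k + 1) + a ≤ D k) : D n + n * a ≤ D 0 := by
  induction n with
  | zero => simp
  | succ n ih =>
    have := h n n.lt_succ_self
    have := ih fun k hk => h k (hk.trans n.lt_succ_self)
    push_cast
    linarith

/-- Example 5 (smooth case): under the relaxed aiming condition
`⟨∇f(x), x − proj_S(x)⟩ ≥ c₁ f(x) − c₂` with `f⋆ = 0`, `L`-smoothness, and the
Polyak-type stepsize `γᵏ = c₁ f(xᵏ)/‖∇f(xᵏ)‖²`, gradient descent achieves an
`O(1/K)` rate for the minimum function value up to `2c₂/c₁`. -/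
theorem aiming_condition_smooth_rate
    {d : ℕ} (f : EuclideanSpace ℝ (Fin d) → ℝ)
    (hf : ContDiff ℝ 1 f)
    (L : ℝ) (hL : 0 < L)
    (hsmooth : ∀ y z, ‖gradient f y - gradient f z‖ ≤ L * ‖y - z‖)
    (S : Set (EuclideanSpace ℝ (Fin d)))
    (hSne : S.Nonempty)
    (hSmin : ∀ s ∈ S, ∀ y, f s ≤ f y)
    (hfstar : ∀ s ∈ S, f s = 0)
    (proj : EuclideanSpace ℝ (Fin d) → EuclideanSpace ℝ (Fin d))
    (hproj : ∀ y, proj y ∈ S ∧ ∀ z ∈ S, ‖y - proj y‖ ≤ ‖y - z‖)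
    (c₁ c₂ : ℝ) (hc₁ : 0 < c₁) (hc₂ : 0 ≤ c₂)
    (hass : ∀ y, c₁ * f y - c₂ ≤ ⟪gradient f y, y - proj y⟫)
    (x : ℕ → EuclideanSpace ℝ (Fin d)) (γ : ℕ → ℝ)
    (hupd : ∀ k, x (k + 1) = x k - γ k • gradient f (x k))
    (hγ : ∀ k, γ k = c₁ * f (x k) / ‖gradient f (x k)‖ ^ 2)
    (K : ℕ) :
    (Finset.range (K + 1)).inf' ⟨0, Finset.mem_range.mpr (Nat.succ_pos K)⟩ (fun k => f (x k)) ≤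
      2 * L * ‖x 0 - proj (x 0)‖ ^ 2 / (c₁ ^ 2 * (K + 1)) + 2 * c₂ / c₁ := by
  obtain ⟨s, hs⟩ := hSne
  have hf0 : ∀ y, 0 ≤ f y := fun y => hfstar s hs ▸ hSmin s hs y
  set m := (Finset.range (K + 1)).inf' ⟨0, Finset.mem_range.mpr (Nat.succ_pos K)⟩ fun k => f (x k)
  rcases le_or_gt m (2 * c₂ / c₁) with hm | hm
  · have : 0 ≤ 2 * L * ‖x 0 - proj (x 0)‖ ^ 2 / (c₁ ^ 2 * (K + 1)) := by positivity
    linarith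
  rw [div_lt_iff₀ hc₁, mul_comm] at hm
  have hstep : ∀ k < K + 1, ‖x (k + 1) - proj (x (k + 1))‖ ^ 2 + c₁ / (2 * L) * (c₁ * m - 2 * c₂)
      ≤ ‖x k - proj (x k)‖ ^ 2 := by
    intro k hk
    have hmk : m ≤ f (x k) := Finset.inf'_le _ (Finset.mem_range.2 hk)
    have hcloser := pow_le_pow_left₀ (norm_nonneg _) ((hproj (x (k + 1))).2 _ (hproj (x k)).1) 2
    have hdecr := polyak_step_decrease (x k) (proj (x k)) _ hL hc₂
      (sq_norm_gradient_le hL (hf.differentiable one_ne_zero) hsmooth hf0 (x k)) (hass (x k))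
      (by nlinarith)
    rw [← hγ, ← hupd] at hdecr
    have : c₁ / (2 * L) * (c₁ * m - 2 * c₂) ≤ c₁ / (2 * L) * (c₁ * f (x k) - 2 * c₂) := by
      gcongr
    linarith
  have htotal := add_mul_le_of_forall_add_le (D := fun k => ‖x k - proj (x k)‖ ^ 2) hstep
  have : 0 ≤ ‖x (K + 1) - proj (x (K + 1))‖ ^ 2 := by positivity
  rw [← sub_le_iff_le_add, le_div_iff₀ (by positivity)]
  calc (m - 2 * c₂ / c₁) * (c₁ ^ 2 * (K + 1))
      = 2 * L * ((K + 1 : ℕ) * (c₁ / (2 * L) * (c₁ * m - 2 * c₂))) := by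
        field_simp
        push_cast
        ring
    _ ≤ 2 * L * ‖x 0 - proj (x 0)‖ ^ 2 := by gcongr; linarith
end

section
/- Let f(x) = E_{ξ∼D}[f_ξ(x)] with each f_ξ continuously differentiable, let S be a nonempty set of global minimizers of f, ∅ ≠ S̃ ⊆ S, and suppose there exist L > 0, c₁ > 0, and constants c₂ξ ≥ 0 with ⟨∇f_ξ(x), x − proj_{S̃}(x)⟩ ≥ (c₁/L)‖∇f_ξ(x)‖² − c₂ξ for all x ∈ ℝ^d. Let x^{k+1} = x^k − γ^k ∇f_{ξ^k}(x^k) with ξ^k i.i.d., γ^k = min{c₁/L, γ_b}, γ_b ≥ c₁/L. Then for every K ≥ 0: min_{0≤k≤K} ‖∇f(x^k)‖² ≤ L² E[‖x^0 − x^0_p‖²]/(c₁² (K+1)) + 2 L² γ_b E[c₂ξ]/c₁², where x^0_p := proj_{S̃}(x^0). (Here ‖∇f(x^k)‖² ≤ E_ξ[‖∇f_ξ(x^k)‖²] by Jensen's inequality, and min over k is in expectation.) -/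
open scoped RealInnerProductSpace
open MeasureTheory

/-!
Since `proj x^k ∈ S̃` and `proj x^{k+1}` is a nearest point of `S̃` to `x^{k+1}`, the distance to
`S̃` after the step `x^{k+1} = x^k - γ g_k` is at most `‖x^k - γ g_k - proj x^k‖`. Expanding the
square and inserting the assumption with `γ = c₁/L` gives
`E‖x^{k+1} - proj x^{k+1}‖² ≤ E‖x^k - proj x^k‖² - γ² E‖g_k‖² + 2γ E c₂`, which telescopes; the
minimum over `k ≤ K` is at most the average.

It remains to compare `E‖∇f(x^k)‖²` with `E‖∇f_{ξ^k}(x^k)‖²`. As `ξ^k` is independent of `x^k`,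
the law of `(x^k, ξ^k)` is a product measure and Tonelli reduces this to Jensen's inequality
`‖∫ ∇f_i(y) dD‖² ≤ ∫ ‖∇f_i(y)‖² dD` at each fixed `y`. Tonelli needs joint measurability of
`(y, i) ↦ ∇f_i(y)`, a Carathéodory function on the closed set of `y` where `i ↦ ∇f_i(y)` is
a.e.-measurable; off that set `∇f(y) = ∫ ∇f_i(y) dD` is the junk value `0`.
-/

open Filter Topology Set ProbabilityTheory
open scoped ENNReal

section Caratheodory

variable {ι α β : Type*} [TopologicalSpace ι] [TopologicalSpace.MetrizableSpace ι]
  [SecondCountableTopology ι] [MeasurableSpace ι] [OpensMeasurableSpace ι]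
  [MeasurableSpace α] [TopologicalSpace β] [TopologicalSpace.PseudoMetrizableSpace β] [Zero β]
  {u : ι → α → β} {s : Set ι}

theorem stronglyMeasurable_indicator_uncurry_of_continuous
    (hu_cont : ∀ a, Continuous fun i => u i a) (hs : MeasurableSet s)
    (hu : ∀ i ∈ s, StronglyMeasurable (u i)) :
    StronglyMeasurable ((s ×ˢ univ).indicator (Function.uncurry u)) := by
  have hus : StronglyMeasurable (Function.uncurry fun i : s => u i) :=
    stronglyMeasurable_uncurry_of_continuous_of_stronglyMeasurable
      (fun a => (hu_cont a).comp continuous_subtype_val) fun i => hu i i.2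
  have hmap : Measurable fun p : ↥(s ×ˢ (univ : Set α)) => ((⟨p.1.1, p.2.1⟩ : s), p.1.2) :=
    ((measurable_fst.comp measurable_subtype_coe).subtype_mk).prodMk
      (measurable_snd.comp measurable_subtype_coe)
  refine stronglyMeasurable_of_restrict_of_restrict_compl (hs.prod MeasurableSet.univ) ?_ ?_
  · convert hus.comp_measurable hmap using 1
    ext p
    simp [Function.uncurry]
  · convert stronglyMeasurable_const (b := (0 : β)) using 1
    ext p
    simp [indicator_of_notMem p.2]

theorem aestronglyMeasurable_uncurry_restrict_of_continuous {P : Measure α} [SFinite P]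
    (hu_cont : ∀ a, Continuous fun i => u i a) (hs : MeasurableSet s)
    (hu : ∀ i ∈ s, AEStronglyMeasurable (u i) P) (Q : Measure ι) :
    AEStronglyMeasurable (Function.uncurry u) ((Q.restrict s).prod P) := by
  obtain ⟨C, hCs, hCc, hsC⟩ :=
    (TopologicalSpace.IsSeparable.of_separableSpace s).exists_countable_dense_subset
  have hae : ∀ᵐ a ∂P, ∀ i (hi : i ∈ C), u i a = (hu i (hCs hi)).mk _ a :=
    (ae_ball_iff hCc).2 fun i hi => (hu i (hCs hi)).ae_eq_mk
  obtain ⟨B, hBbad, hBm, hB0⟩ := exists_measurable_superset_of_null (ae_iff.1 hae)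
  -- Killing every column on the null set `B` makes the columns over `C`, hence by continuity
  -- those over `s ⊆ closure C`, measurable.
  set v : ι → α → β := fun i => Bᶜ.indicator (u i)
  have hv_cont : ∀ a, Continuous fun i => v i a := by
    intro a
    by_cases ha : a ∈ Bᶜ
    · simpa [v, indicator_of_mem ha] using hu_cont a
    · simpa [v, indicator_of_notMem ha] using continuous_const
  have hvC : ∀ i ∈ C, StronglyMeasurable (v i) := by
    intro i hi
    convert (hu i (hCs hi)).stronglyMeasurable_mk.indicator hBm.compl using 1
    ext a
    by_cases ha : a ∈ Bᶜ
    · simp only [v, indicator_of_mem ha]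
      by_contra h
      exact ha (hBbad fun hall => h (hall i hi))
    · simp [v, indicator_of_notMem ha]
  have hvs : ∀ i ∈ s, StronglyMeasurable (v i) := by
    intro i hi
    obtain ⟨c, hcC, hci⟩ := mem_closure_iff_seq_limit.1 (hsC hi)
    exact stronglyMeasurable_of_tendsto atTop (fun n => hvC _ (hcC n))
      (tendsto_pi_nhds.2 fun a => ((hv_cont a).tendsto i).comp hci)
  refine (stronglyMeasurable_indicator_uncurry_of_continuous hv_cont hs hvs).aestronglyMeasurable
    |>.congr ?_
  have hfst : ∀ᵐ p ∂(Q.restrict s).prod P, p.1 ∈ s :=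
    Measure.quasiMeasurePreserving_fst.ae (ae_restrict_mem hs)
  have hsnd : ∀ᵐ p ∂(Q.restrict s).prod P, p.2 ∉ B :=
    Measure.quasiMeasurePreserving_snd.ae (measure_eq_zero_iff_ae_notMem.1 hB0)
  filter_upwards [hfst, hsnd] with p hp1 hp2
  simp [indicator_of_mem (mk_mem_prod hp1 (mem_univ p.2)), v, Function.uncurry, hp2]

end Caratheodory

theorem enorm_integral_sq_le_lintegral_enorm_sq {α E : Type*} [MeasurableSpace α]
    [NormedAddCommGroup E] [NormedSpace ℝ E] {P : Measure α} [IsProbabilityMeasure P]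
    {h : α → E} (hh : AEStronglyMeasurable h P) :
    ‖∫ a, h a ∂P‖ₑ ^ 2 ≤ ∫⁻ a, ‖h a‖ₑ ^ 2 ∂P := by
  have h12 : eLpNorm h 1 P ≤ eLpNorm h 2 P := eLpNorm_le_eLpNorm_of_exponent_le (by norm_num) hh
  rw [eLpNorm_one_eq_lintegral_enorm,
    eLpNorm_eq_lintegral_rpow_enorm_toReal (by norm_num) (by norm_num)] at h12
  simp only [ENNReal.toReal_ofNat, ENNReal.rpow_two] at h12
  calc ‖∫ a, h a ∂P‖ₑ ^ 2 ≤ ((∫⁻ a, ‖h a‖ₑ ^ 2 ∂P) ^ (1 / 2 : ℝ)) ^ 2 := by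
        gcongr; exact (enorm_integral_le_lintegral_enorm h).trans h12
    _ = ∫⁻ a, ‖h a‖ₑ ^ 2 ∂P := by
      rw [← ENNReal.rpow_natCast, ← ENNReal.rpow_mul]; norm_num

theorem isClosed_setOf_aestronglyMeasurable {ι X F : Type*} [MeasurableSpace ι]
    [TopologicalSpace X] [FrechetUrysohnSpace X] [TopologicalSpace F]
    [TopologicalSpace.PseudoMetrizableSpace F]
    {V : ι → X → F} (hV : ∀ i, Continuous (V i)) (P : Measure ι) :
    IsClosed {y | AEStronglyMeasurable (fun i => V i y) P} := by
  refine isClosed_of_closure_subset fun y hy => ?_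
  obtain ⟨z, hz, hzy⟩ := mem_closure_iff_seq_limit.1 hy
  exact aestronglyMeasurable_of_tendsto_ae atTop hz
    (ae_of_all _ fun i => ((hV i).tendsto y).comp hzy)

section Independence

variable {Ω I X F : Type*} [MeasurableSpace Ω] [MeasurableSpace I]
  [TopologicalSpace X] [TopologicalSpace.MetrizableSpace X] [SecondCountableTopology X]
  [MeasurableSpace X] [OpensMeasurableSpace X] [NormedAddCommGroup F] [NormedSpace ℝ F]
  [MeasurableSpace F] [OpensMeasurableSpace F]
  {μ : Measure Ω} [IsProbabilityMeasure μ] {D : Measure I} [IsProbabilityMeasure D]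
  {V : I → X → F} {U : X → F} {ξ : Ω → I} {x : Ω → X}

theorem lintegral_enorm_sq_comp_le_of_indepFun (hV : ∀ i, Continuous (V i)) (hU : Measurable U)
    (hUV : ∀ y, U y = ∫ i, V i y ∂D) (hξ : Measurable ξ) (hx : Measurable x)
    (hlaw : μ.map ξ = D) (hindep : IndepFun ξ x μ) :
    ∫⁻ ω, ‖U (x ω)‖ₑ ^ 2 ∂μ ≤ ∫⁻ ω, ‖V (ξ ω) (x ω)‖ₑ ^ 2 ∂μ := by
  set ν := μ.map x
  set Y := {y | AEStronglyMeasurable (fun i => V i y) D}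
  have hY : MeasurableSet Y := (isClosed_setOf_aestronglyMeasurable hV D).measurableSet
  have hlaw_pair : μ.map (fun ω => (x ω, ξ ω)) = ν.prod D := by
    rw [← hlaw]
    exact (indepFun_iff_map_prod_eq_prod_map_map hx.aemeasurable hξ.aemeasurable).1 hindep.symm
  -- Off `Y` the Bochner integral defining `U y` takes its junk value `0`.
  have hUY : (fun y => ‖U y‖ₑ ^ 2).support ⊆ Y := by
    intro y hy
    by_contra hyY
    refine hy ?_
    simp [hUV y, integral_undef fun hint => hyY hint.aestronglyMeasurable]
  have hmeas : AEMeasurable (fun p : X × I => ‖V p.2 p.1‖ₑ ^ 2) ((ν.restrict Y).prod D) :=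
    ((aestronglyMeasurable_uncurry_restrict_of_continuous (u := fun y i => V i y)
      (fun i => hV i) hY (fun _ hy => hy) ν).enorm).pow_const 2
  calc ∫⁻ ω, ‖U (x ω)‖ₑ ^ 2 ∂μ = ∫⁻ y, ‖U y‖ₑ ^ 2 ∂ν :=
        (lintegral_map (hU.enorm.pow_const 2) hx).symm
    _ = ∫⁻ y in Y, ‖U y‖ₑ ^ 2 ∂ν := (setLIntegral_eq_of_support_subset hUY).symm
    _ ≤ ∫⁻ y in Y, ∫⁻ i, ‖V i y‖ₑ ^ 2 ∂D ∂ν := setLIntegral_mono' hY fun y hy => by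
        rw [hUV y]; exact enorm_integral_sq_le_lintegral_enorm_sq hy
    _ = ∫⁻ p, ‖V p.2 p.1‖ₑ ^ 2 ∂(ν.restrict Y).prod D := (lintegral_prod _ hmeas).symm
    _ ≤ ∫⁻ p, ‖V p.2 p.1‖ₑ ^ 2 ∂ν.prod D :=
        lintegral_mono' (Measure.prod_mono Measure.restrict_le_self le_rfl) le_rfl
    _ ≤ ∫⁻ ω, ‖V (ξ ω) (x ω)‖ₑ ^ 2 ∂μ := hlaw_pair ▸ lintegral_map_le _ _

theorem integral_norm_sq_comp_le_of_indepFun (hV : ∀ i, Continuous (V i)) (hU : Measurable U)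
    (hUV : ∀ y, U y = ∫ i, V i y ∂D) (hξ : Measurable ξ) (hx : Measurable x)
    (hlaw : μ.map ξ = D) (hindep : IndepFun ξ x μ)
    (hint : Integrable (fun ω => ‖V (ξ ω) (x ω)‖ ^ 2) μ) :
    ∫ ω, ‖U (x ω)‖ ^ 2 ∂μ ≤ ∫ ω, ‖V (ξ ω) (x ω)‖ ^ 2 ∂μ := by
  have hsq : ∀ z : F, ENNReal.ofReal (‖z‖ ^ 2) = ‖z‖ₑ ^ 2 := fun z => by
    rw [ENNReal.ofReal_pow (norm_nonneg z), ofReal_norm]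
  rw [integral_eq_lintegral_of_nonneg_ae (ae_of_all _ fun _ => by positivity)
      (f := fun ω => ‖U (x ω)‖ ^ 2) ((hU.comp hx).norm.pow_const 2).aestronglyMeasurable,
    integral_eq_lintegral_of_nonneg_ae (ae_of_all _ fun _ => by positivity)
      hint.aestronglyMeasurable]
  refine ENNReal.toReal_mono hint.lintegral_lt_top.ne ?_
  simp only [hsq]
  exact lintegral_enorm_sq_comp_le_of_indepFun hV hU hUV hξ hx hlaw hindep

end Independence

section Gradient

variable {F : Type*} [NormedAddCommGroup F] [InnerProductSpace ℝ F] [CompleteSpace F]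

theorem measurable_gradient [MeasurableSpace F] [BorelSpace F] (f : F → ℝ) :
    Measurable (gradient f) :=
  (InnerProductSpace.toDual ℝ F).symm.continuous.measurable.comp (measurable_fderiv ℝ f)

theorem ContDiff.continuous_gradient {f : F → ℝ} (hf : ContDiff ℝ 1 f) :
    Continuous (gradient f) :=
  (InnerProductSpace.toDual ℝ F).symm.continuous.comp (hf.continuous_fderiv one_ne_zero)

end Gradient

theorem sq_norm_sub_proj_step_le {E : Type*} [NormedAddCommGroup E] [InnerProductSpace ℝ E]
    {s : Set E} {proj : E → E} (hproj : ∀ y, proj y ∈ s ∧ ∀ z ∈ s, ‖y - proj y‖ ≤ ‖y - z‖)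
    {y g : E} {γ c : ℝ} (hγ : 0 ≤ γ) (hyg : γ * ‖g‖ ^ 2 - c ≤ ⟪g, y - proj y⟫) :
    ‖y - γ • g - proj (y - γ • g)‖ ^ 2 ≤ ‖y - proj y‖ ^ 2 - γ ^ 2 * ‖g‖ ^ 2 + 2 * γ * c := by
  have hmin : ‖y - γ • g - proj (y - γ • g)‖ ≤ ‖y - γ • g - proj y‖ :=
    (hproj _).2 _ (hproj y).1
  have hexpand : ‖y - γ • g - proj y‖ ^ 2
      = ‖y - proj y‖ ^ 2 - 2 * γ * ⟪g, y - proj y⟫ + γ ^ 2 * ‖g‖ ^ 2 := by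
    rw [sub_right_comm, norm_sub_sq_real, real_inner_smul_right, norm_smul, mul_pow,
      Real.norm_eq_abs, sq_abs, real_inner_comm]
    ring
  nlinarith [pow_le_pow_left₀ (norm_nonneg _) hmin 2, mul_le_mul_of_nonneg_left hyg hγ]

theorem integral_sq_norm_sub_proj_step_le {Ω E : Type*} [MeasurableSpace Ω] {μ : Measure Ω}
    [NormedAddCommGroup E] [InnerProductSpace ℝ E]
    {s : Set E} {proj : E → E} (hproj : ∀ y, proj y ∈ s ∧ ∀ z ∈ s, ‖y - proj y‖ ≤ ‖y - z‖)
    {y g : Ω → E} {γ : ℝ} {c : Ω → ℝ} (hγ : 0 ≤ γ)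
    (hyg : ∀ ω, γ * ‖g ω‖ ^ 2 - c ω ≤ ⟪g ω, y ω - proj (y ω)⟫)
    (hint_step : Integrable (fun ω => ‖y ω - γ • g ω - proj (y ω - γ • g ω)‖ ^ 2) μ)
    (hint_y : Integrable (fun ω => ‖y ω - proj (y ω)‖ ^ 2) μ)
    (hint_g : Integrable (fun ω => ‖g ω‖ ^ 2) μ) (hint_c : Integrable c μ) :
    ∫ ω, ‖y ω - γ • g ω - proj (y ω - γ • g ω)‖ ^ 2 ∂μ ≤
      ∫ ω, ‖y ω - proj (y ω)‖ ^ 2 ∂μ - γ ^ 2 * ∫ ω, ‖g ω‖ ^ 2 ∂μ + 2 * γ * ∫ ω, c ω ∂μ := by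
  have hint_gγ := hint_g.const_mul (γ ^ 2)
  have hint_yg : Integrable (fun ω => ‖y ω - proj (y ω)‖ ^ 2 - γ ^ 2 * ‖g ω‖ ^ 2) μ :=
    hint_y.sub hint_gγ
  have hint_cγ := hint_c.const_mul (2 * γ)
  rw [← integral_const_mul, ← integral_const_mul, ← integral_sub hint_y hint_gγ,
    ← integral_add hint_yg hint_cγ]
  exact integral_mono hint_step (hint_yg.add hint_cγ) fun ω =>
    sq_norm_sub_proj_step_le hproj hγ (hyg ω)

theorem sum_range_le_of_le_sub_add {a b : ℕ → ℝ} {c : ℝ} (h : ∀ k, a (k + 1) ≤ a k - b k + c)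
    (n : ℕ) : ∑ k ∈ Finset.range n, b k ≤ a 0 - a n + n * c := by
  calc ∑ k ∈ Finset.range n, b k ≤ ∑ k ∈ Finset.range n, (a k - a (k + 1) + c) :=
        Finset.sum_le_sum fun k _ => by linarith [h k]
    _ = a 0 - a n + n * c := by
        rw [Finset.sum_add_distrib, Finset.sum_range_sub', Finset.sum_const, Finset.card_range,
          nsmul_eq_mul]

theorem inf'_range_le_of_descent {a G g : ℕ → ℝ} {γ C : ℝ} (hγ : 0 < γ) (ha : ∀ k, 0 ≤ a k)
    (hgG : ∀ k, g k ≤ G k) (hrec : ∀ k, a (k + 1) ≤ a k - γ ^ 2 * G k + 2 * γ * C) (K : ℕ) :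
    (Finset.range (K + 1)).inf' Finset.nonempty_range_add_one g ≤
      a 0 / (γ ^ 2 * (K + 1)) + 2 * C / γ := by
  set m := (Finset.range (K + 1)).inf' Finset.nonempty_range_add_one g
  have hm : (K + 1 : ℝ) * m ≤ ∑ k ∈ Finset.range (K + 1), G k := by
    have := Finset.card_nsmul_le_sum _ g m fun k hk => Finset.inf'_le g hk
    rw [Finset.card_range, nsmul_eq_mul] at this
    push_cast at this
    exact this.trans (Finset.sum_le_sum fun k _ => hgG k)
  have htel : ∑ k ∈ Finset.range (K + 1), γ ^ 2 * G k ≤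
      a 0 - a (K + 1) + (K + 1 : ℕ) * (2 * γ * C) :=
    sum_range_le_of_le_sub_add hrec (K + 1)
  rw [← Finset.mul_sum] at htel
  push_cast at htel
  rw [div_add_div _ _ (by positivity) hγ.ne', le_div_iff₀ (by positivity)]
  nlinarith [ha (K + 1), mul_le_mul_of_nonneg_left hm (sq_nonneg γ)]

theorem sgd_gradient_norm_rate_general
    {d : ℕ} {I : Type*} [MeasurableSpace I]
    {Ω : Type*} [MeasurableSpace Ω] (μ : Measure Ω) [IsProbabilityMeasure μ]
    (D : Measure I) [IsProbabilityMeasure D]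
    (f : I → EuclideanSpace ℝ (Fin d) → ℝ)
    (hf : ∀ i, ContDiff ℝ 1 (f i))
    (fbar : EuclideanSpace ℝ (Fin d) → ℝ)
    (hgrad : ∀ y, gradient fbar y = ∫ i, gradient (f i) y ∂D)
    (St : Set (EuclideanSpace ℝ (Fin d)))
    (proj : EuclideanSpace ℝ (Fin d) → EuclideanSpace ℝ (Fin d))
    (hproj : ∀ y, proj y ∈ St ∧ ∀ z ∈ St, ‖y - proj y‖ ≤ ‖y - z‖)
    (L c₁ : ℝ) (hL : 0 < L) (hc₁ : 0 < c₁)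
    (c₂ : I → ℝ) (hc₂ : ∀ i, 0 ≤ c₂ i)
    (hass : ∀ i y, c₁ / L * ‖gradient (f i) y‖ ^ 2 - c₂ i ≤ ⟪gradient (f i) y, y - proj y⟫)
    (ξ : ℕ → Ω → I) (hξmeas : ∀ k, Measurable (ξ k))
    (hiid : ∀ k, Measure.map (ξ k) μ = D)
    (x : ℕ → Ω → EuclideanSpace ℝ (Fin d)) (hxmeas : ∀ k, Measurable (x k))
    (hindep : ∀ k, ProbabilityTheory.IndepFun (ξ k) (x k) μ)
    (γ : ℕ → Ω → ℝ) (γb : ℝ) (hγb : c₁ / L ≤ γb)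
    (hupd : ∀ k ω, x (k + 1) ω = x k ω - γ k ω • gradient (f (ξ k ω)) (x k ω))
    (hγ : ∀ k ω, γ k ω = min (c₁ / L) γb)
    (hint1 : ∀ k, Integrable (fun ω => ‖x k ω - proj (x k ω)‖ ^ 2) μ)
    (hint2 : ∀ k, Integrable (fun ω => ‖gradient (f (ξ k ω)) (x k ω)‖ ^ 2) μ)
    (hint4 : Integrable c₂ D)
    (K : ℕ) :
    (Finset.range (K + 1)).inf' Finset.nonempty_range_add_one
        (fun k => ∫ ω, ‖gradient fbar (x k ω)‖ ^ 2 ∂μ) ≤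
      L ^ 2 * (∫ ω, ‖x 0 ω - proj (x 0 ω)‖ ^ 2 ∂μ) / (c₁ ^ 2 * (K + 1))
      + 2 * L ^ 2 * γb * (∫ i, c₂ i ∂D) / c₁ ^ 2 := by
  have hstep : 0 < c₁ / L := div_pos hc₁ hL
  have hγ_eq : ∀ k ω, γ k ω = c₁ / L := fun k ω => (hγ k ω).trans (min_eq_left hγb)
  have hc₂ξ : ∀ k, Integrable (fun ω => c₂ (ξ k ω)) μ := fun k =>
    (hiid k ▸ hint4).comp_measurable (hξmeas k)
  have hEc₂ : ∀ k, ∫ ω, c₂ (ξ k ω) ∂μ = ∫ i, c₂ i ∂D := fun k => by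
    rw [← hiid k, integral_map (hξmeas k).aemeasurable (hiid k ▸ hint4.aestronglyMeasurable)]
  have hdescent : ∀ k, ∫ ω, ‖x (k + 1) ω - proj (x (k + 1) ω)‖ ^ 2 ∂μ ≤
      ∫ ω, ‖x k ω - proj (x k ω)‖ ^ 2 ∂μ
        - (c₁ / L) ^ 2 * ∫ ω, ‖gradient (f (ξ k ω)) (x k ω)‖ ^ 2 ∂μ
        + 2 * (c₁ / L) * ∫ i, c₂ i ∂D := by
    intro k
    have hint_step := hint1 (k + 1)
    simp only [hupd, hγ_eq] at hint_step ⊢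
    rw [← hEc₂ k]
    exact integral_sq_norm_sub_proj_step_le hproj hstep.le (fun ω => hass _ _) hint_step
      (hint1 k) (hint2 k) (hc₂ξ k)
  have hJensen : ∀ k, ∫ ω, ‖gradient fbar (x k ω)‖ ^ 2 ∂μ ≤
      ∫ ω, ‖gradient (f (ξ k ω)) (x k ω)‖ ^ 2 ∂μ := fun k =>
    integral_norm_sq_comp_le_of_indepFun (V := fun i => gradient (f i))
      (fun i => (hf i).continuous_gradient) (measurable_gradient fbar) hgrad (hξmeas k)
      (hxmeas k) (hiid k) (hindep k) (hint2 k)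
  refine (inf'_range_le_of_descent (a := fun k => ∫ ω, ‖x k ω - proj (x k ω)‖ ^ 2 ∂μ) hstep
    (fun k => integral_nonneg fun ω => sq_nonneg _) hJensen hdescent K).trans
    (add_le_add (le_of_eq ?_) ?_)
  · field_simp
  · have hc₁γb : c₁ ≤ L * γb := by rwa [div_le_iff₀ hL, mul_comm] at hγb
    have hC : 0 ≤ ∫ i, c₂ i ∂D := integral_nonneg hc₂
    rw [div_div_eq_mul_div, div_le_div_iff₀ hc₁ (by positivity)]
    nlinarith [mul_le_mul_of_nonneg_left hc₁γb (by positivity : 0 ≤ 2 * L * c₁ * ∫ i, c₂ i ∂D)]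

/-- Example 7: per-sample unified parametric assumption with progress function
`P_ξ(x) = (1/L)‖∇f_ξ(x)‖²`; SGD with the constant stepsize `min(c₁/L, γ_b) = c₁/L`
achieves an `O(1/K)` rate for the minimum expected squared gradient norm of `f`,
up to the neighborhood `2L²γ_b E[c₂_ξ]/c₁²`. -/
theorem sgd_gradient_norm_rate
    {d : ℕ} {I : Type*} [MeasurableSpace I]
    {Ω : Type*} [MeasurableSpace Ω] (μ : Measure Ω) [IsProbabilityMeasure μ]
    (D : Measure I) [IsProbabilityMeasure D]
    (f : I → EuclideanSpace ℝ (Fin d) → ℝ)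
    (hf : ∀ i, ContDiff ℝ 1 (f i))
    (fbar : EuclideanSpace ℝ (Fin d) → ℝ)
    (hfbar : ∀ y, fbar y = ∫ i, f i y ∂D)
    (hgrad : ∀ y, gradient fbar y = ∫ i, gradient (f i) y ∂D)
    (S St : Set (EuclideanSpace ℝ (Fin d)))
    (hSne : S.Nonempty)
    (hSmin : ∀ s ∈ S, ∀ y, fbar s ≤ fbar y)
    (hStS : St ⊆ S) (hStne : St.Nonempty)
    (proj : EuclideanSpace ℝ (Fin d) → EuclideanSpace ℝ (Fin d))
    (hproj : ∀ y, proj y ∈ St ∧ ∀ z ∈ St, ‖y - proj y‖ ≤ ‖y - z‖)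
    (L c₁ : ℝ) (hL : 0 < L) (hc₁ : 0 < c₁)
    (c₂ : I → ℝ) (hc₂ : ∀ i, 0 ≤ c₂ i)
    (hass : ∀ i y, c₁ / L * ‖gradient (f i) y‖ ^ 2 - c₂ i ≤ ⟪gradient (f i) y, y - proj y⟫)
    (ξ : ℕ → Ω → I) (hξmeas : ∀ k, Measurable (ξ k))
    (hiid : ∀ k, Measure.map (ξ k) μ = D)
    (x : ℕ → Ω → EuclideanSpace ℝ (Fin d)) (hxmeas : ∀ k, Measurable (x k))
    (hindep : ∀ k, ProbabilityTheory.IndepFun (ξ k) (x k) μ)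
    (γ : ℕ → Ω → ℝ) (γb : ℝ) (hγb : c₁ / L ≤ γb)
    (hupd : ∀ k ω, x (k + 1) ω = x k ω - γ k ω • gradient (f (ξ k ω)) (x k ω))
    (hγ : ∀ k ω, γ k ω = min (c₁ / L) γb)
    (hint1 : ∀ k, Integrable (fun ω => ‖x k ω - proj (x k ω)‖ ^ 2) μ)
    (hint2 : ∀ k, Integrable (fun ω => ‖gradient (f (ξ k ω)) (x k ω)‖ ^ 2) μ)
    (hint3 : ∀ k, Integrable (fun ω => ‖gradient fbar (x k ω)‖ ^ 2) μ)
    (hint4 : Integrable c₂ D)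
    (K : ℕ) :
    (Finset.range (K + 1)).inf' Finset.nonempty_range_add_one
        (fun k => ∫ ω, ‖gradient fbar (x k ω)‖ ^ 2 ∂μ) ≤
      L ^ 2 * (∫ ω, ‖x 0 ω - proj (x 0 ω)‖ ^ 2 ∂μ) / (c₁ ^ 2 * (K + 1))
      + 2 * L ^ 2 * γb * (∫ i, c₂ i ∂D) / c₁ ^ 2 :=
  sgd_gradient_norm_rate_general μ D f hf fbar hgrad St proj hproj L c₁ hL hc₁ c₂ hc₂ hass ξ hξmeas
    hiid x hxmeas hindep γ γb hγb hupd hγ hint1 hint2 hint4 K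
end

section
/- Define f₂ : ℝ → ℝ by f₂(x) = x² for x ≥ −1 and f₂(x) = 4√(−x) − 3 for x < −1, whose unique global minimizer is x⋆ = 0 with minimal value 0. Then for every constant c₂ ≥ 0 there exists x ∈ ℝ such that f₂′(x) · (x − 0) < f₂(x) − c₂; that is, f₂ does not satisfy the inequality ⟨∇f(x), x − x⋆⟩ ≥ f(x) − c₂ (the c₁ = 1 case of the unified parametric assumption with P(x) = f(x) − f⋆) for any finite c₂ ≥ 0. -/
/-!
On the branch `x < -1` one has `f₂′(x) · x = 2√(-x)` while `f₂(x) = 4√(-x) - 3`, so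
`f₂(x) - f₂′(x) · x = 2√(-x) - 3` is unbounded; `x = -(c₂ + 3)²` makes it exceed `c₂`.
-/

open Real Filter Topology

lemma hasDerivAt_sqrt_neg {x : ℝ} (hx : x < 0) :
    HasDerivAt (fun y => √(-y)) (-(2 * √(-x))⁻¹) x :=
  ((hasDerivAt_neg x).sqrt (neg_ne_zero.2 hx.ne)).congr_deriv (by ring)

lemma deriv_mul_eq_of_eventuallyEq_sqrt_neg {f : ℝ → ℝ} {x a b : ℝ} (hx : x < 0)
    (hf : f =ᶠ[𝓝 x] fun y => a * √(-y) - b) : deriv f x * x = a / 2 * √(-x) := by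
  rw [hf.deriv_eq, (((hasDerivAt_sqrt_neg hx).const_mul a).sub_const b).deriv]
  have hs : 0 < √(-x) := sqrt_pos.2 (neg_pos.2 hx)
  have hx_sq : x = -√(-x) ^ 2 := by rw [sq_sqrt (neg_pos.2 hx).le, neg_neg]
  rw [hx_sq, neg_neg, sqrt_sq hs.le]
  field_simp

theorem f2_fails_c1_eq_one_general
    (f₂ : ℝ → ℝ)
    (hf₂ : ∀ x : ℝ, f₂ x = if -1 ≤ x then x ^ 2 else 4 * Real.sqrt (-x) - 3) :
    ∀ c₂ : ℝ, 0 ≤ c₂ → ∃ x : ℝ, deriv f₂ x * (x - 0) < f₂ x - c₂ := by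
  intro c₂ hc₂
  set t := c₂ + 3
  have hx : -t ^ 2 < -1 := by nlinarith
  have hsqrt : √(-(-t ^ 2)) = t := by rw [neg_neg, sqrt_sq (by positivity)]
  have hf_left : ∀ y < -1, f₂ y = 4 * √(-y) - 3 := fun y hy => by
    rw [hf₂, if_neg (not_le.2 hy)]
  have hderiv : deriv f₂ (-t ^ 2) * (-t ^ 2) = 4 / 2 * √(-(-t ^ 2)) :=
    deriv_mul_eq_of_eventuallyEq_sqrt_neg (by linarith) ((eventually_lt_nhds hx).mono hf_left)
  refine ⟨-t ^ 2, ?_⟩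
  rw [sub_zero, hderiv, hf_left _ hx, hsqrt]
  linarith

/-- The function `f₂` (piecewise `x²` for `x ≥ −1` and `4√(−x) − 3` for `x < −1`),
whose unique global minimizer is `x⋆ = 0` with minimal value `0`, fails the `c₁ = 1`
case of the unified parametric assumption with `P(x) = f(x) − f⋆` for every finite
`c₂ ≥ 0`: there is always a point where `f₂′(x)(x − 0) < f₂(x) − c₂`. -/
theorem f2_fails_c1_eq_one
    (f₂ : ℝ → ℝ)
    (hf₂ : ∀ x : ℝ, f₂ x = if -1 ≤ x then x ^ 2 else 4 * Real.sqrt (-x) - 3)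
    (hmin : ∀ x : ℝ, x ≠ 0 → f₂ 0 < f₂ x) (hval : f₂ 0 = 0) :
    ∀ c₂ : ℝ, 0 ≤ c₂ → ∃ x : ℝ, deriv f₂ x * (x - 0) < f₂ x - c₂ :=
  f2_fails_c1_eq_one_general f₂ hf₂
end
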